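/- If G is a good colored graph in which every vertex is of Type II (degree 4, with two edges each of two distinct colors), then G contains a rainbow cycle; moreover, for every rainbow cycle C in G, the graph G \ C obtained by deleting the edges of C is again a good colored graph. -/

import Mathlib

open scoped Classical

noncomputable section

/-- The degree of a vertex: the number of its neighbors. -/
noncomputable def vdeg {V : Type*} (G : SimpleGraph V) (x : V) : ℕ :=
  (G.neighborSet x).ncard

/-- The color degree of a vertex: the number of distinct colors on its incident edges. -/
noncomputable def colorDeg {V C : Type*} (G : SimpleGraph V) (c : Sym2 V → C) (x : V) : ℕ :=
  {α : C | ∃ y, G.Adj x y ∧ c s(x, y) = α}.ncard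

/-- Every triangle of `G` is monochromatic or rainbow. -/
def TriCond {V C : Type*} (G : SimpleGraph V) (c : Sym2 V → C) : Prop :=
  ∀ x y z : V, G.Adj x y → G.Adj y z → G.Adj x z →
    (c s(x, y) = c s(y, z) ∧ c s(y, z) = c s(x, z)) ∨
    (c s(x, y) ≠ c s(y, z) ∧ c s(y, z) ≠ c s(x, z) ∧ c s(x, y) ≠ c s(x, z))

/-- `v` is a cut vertex of Type X: it has degree 4, and there are pseudoblocks at `v`
(vertex sets `A`, `B` covering `V` with `A ∩ B = {v}` and every edge lying within `A` or
within `B`) such that `v` has two edges into each pseudoblock, the two edges into each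
pseudoblock having the same color. (Such a vertex is automatically a cut vertex, since
any path between the two sides must pass through `v`.) -/
def IsTypeX {V C : Type*} (G : SimpleGraph V) (c : Sym2 V → C) (v : V) : Prop :=
  vdeg G v = 4 ∧
  ∃ A B : Set V, A ∪ B = Set.univ ∧ A ∩ B = {v} ∧
    (∀ e ∈ G.edgeSet, (∀ x ∈ e, x ∈ A) ∨ (∀ x ∈ e, x ∈ B)) ∧
    (∃ a₁ a₂ : V, a₁ ≠ a₂ ∧ a₁ ∈ A ∧ a₂ ∈ A ∧ G.Adj v a₁ ∧ G.Adj v a₂ ∧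
      c s(v, a₁) = c s(v, a₂)) ∧
    (∃ b₁ b₂ : V, b₁ ≠ b₂ ∧ b₁ ∈ B ∧ b₂ ∈ B ∧ G.Adj v b₁ ∧ G.Adj v b₂ ∧
      c s(v, b₁) = c s(v, b₂))

/-- Properties (1)-(5) of a good colored graph: every vertex has even degree, maximum
degree at most 4, every triangle is rainbow or monochromatic, every nonisolated vertex
has color degree exactly 2, and each color class spans at most three vertices. -/
def IsGoodCore {V C : Type*} (G : SimpleGraph V) (c : Sym2 V → C) : Prop :=
  (∀ x, Even (vdeg G x)) ∧ (∀ x, vdeg G x ≤ 4) ∧ TriCond G c ∧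
  (∀ x, vdeg G x ≠ 0 → colorDeg G c x = 2) ∧
  (∀ α : C, {x : V | ∃ y, G.Adj x y ∧ c s(x, y) = α}.ncard ≤ 3)

/-- A good colored graph: properties (1)-(5) together with (6): no cut vertex of Type X. -/
def IsGood {V C : Type*} (G : SimpleGraph V) (c : Sym2 V → C) : Prop :=
  IsGoodCore G c ∧ ∀ v, ¬ IsTypeX G c v

/-- A vertex of Type II: degree 4, with exactly two incident edges of each of two
distinct colors. -/
def IsTypeII {V C : Type*} (G : SimpleGraph V) (c : Sym2 V → C) (x : V) : Prop :=
  vdeg G x = 4 ∧ ∃ α β : C, α ≠ β ∧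
    {y : V | G.Adj x y ∧ c s(x, y) = α}.ncard = 2 ∧
    {y : V | G.Adj x y ∧ c s(x, y) = β}.ncard = 2

/-!
Under (5), Type II makes every colour class a monochromatic triangle: two edges `xy`, `xz` of
colour `γ` make `{x, y, z}` the whole span of `γ`, and the two `γ`-edges at `y` are then `yx`
and `yz`.

Existence: take a rainbow path that cannot be extended at its start `u`, and let `δ` be the
colour at `u` not used by the first edge. Extending along the `δ`-triangle `u t₀ t₁` fails, so
either `t₀` lies on the path with `δ` unused, or `δ` is used, necessarily by the edge `t₀t₁`.
Either way the prefix of the path up to `t₀` or `t₁` avoids `δ` and closes into a rainbow cycle.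

Deletion of a rainbow cycle `C` removes 0 or 2 edges at each vertex and at most one edge of each
triangle, so every vertex keeps both of its colours. If `v` were of Type X in `G \ C` with
pseudoblocks `A`, `B`, an edge of `C` from `A \ B` to `B \ A` would put the third vertex of
its triangle in `A ∩ B = {v}`, giving `v` four edges of one colour; so `A`, `B` are
pseudoblocks of `G` too.
-/

open SimpleGraph

section

variable {V C : Type*} {G H : SimpleGraph V} {c : Sym2 V → C}

def colorSpan (G : SimpleGraph V) (c : Sym2 V → C) (α : C) : Set V :=
  {x | ∃ y, G.Adj x y ∧ c s(x, y) = α}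

def SimpleGraph.Walk.IsRainbow (c : Sym2 V → C) {u v : V} (p : G.Walk u v) : Prop :=
  (p.edges.map c).Nodup

lemma SimpleGraph.Walk.IsRainbow.eq_of_color_eq {u v : V} {p : G.Walk u v} (hp : p.IsRainbow c)
    {e₁ e₂ : Sym2 V} (h₁ : e₁ ∈ p.edges) (h₂ : e₂ ∈ p.edges) (h : c e₁ = c e₂) : e₁ = e₂ :=
  List.inj_on_of_nodup_map hp h₁ h₂ h

lemma TriCond.mono (h : TriCond G c) (hle : H ≤ G) : TriCond H c :=
  fun x y z hxy hyz hxz => h x y z (hle hxy) (hle hyz) (hle hxz)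

lemma vdeg_mono [Finite V] (hle : H ≤ G) (x : V) : vdeg H x ≤ vdeg G x :=
  Set.ncard_le_ncard (fun _ hy => hle hy) (Set.toFinite _)

lemma ncard_colorSpan_mono [Finite V] (hle : H ≤ G) (α : C) :
    (colorSpan H c α).ncard ≤ (colorSpan G c α).ncard :=
  Set.ncard_le_ncard (fun _ ⟨y, hy, hc⟩ => ⟨y, hle hy, hc⟩) (Set.toFinite _)

namespace IsTypeII

variable {x y : V}

lemma ncard_color_eq [Finite V] (hx : IsTypeII G c x) (hy : G.Adj x y) :
    {z | G.Adj x z ∧ c s(x, z) = c s(x, y)}.ncard = 2 := by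
  obtain ⟨hdeg, α, β, hαβ, hα, hβ⟩ := hx
  set Sα := {z | G.Adj x z ∧ c s(x, z) = α}
  set Sβ := {z | G.Adj x z ∧ c s(x, z) = β}
  have hdisj : Disjoint Sα Sβ :=
    Set.disjoint_left.2 fun z hzα hzβ => hαβ (hzα.2.symm.trans hzβ.2)
  have hN : Sα ∪ Sβ = G.neighborSet x := by
    refine Set.eq_of_subset_of_ncard_le (Set.union_subset (fun z hz => hz.1) fun z hz => hz.1) ?_
      (Set.toFinite _)
    rw [Set.ncard_union_eq hdisj, hα, hβ]
    exact hdeg.le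
  have hy' : y ∈ Sα ∪ Sβ := hN ▸ hy
  rcases hy' with hyα | hyβ
  · rwa [hyα.2]
  · rwa [hyβ.2]

lemma exists_ne_color_eq [Finite V] (hx : IsTypeII G c x) (hy : G.Adj x y) :
    ∃ z, z ≠ y ∧ G.Adj x z ∧ c s(x, z) = c s(x, y) := by
  obtain ⟨a, b, hab, hS⟩ := Set.ncard_eq_two.1 (hx.ncard_color_eq hy)
  have hmem : ∀ z, z ∈ ({a, b} : Set V) → G.Adj x z ∧ c s(x, z) = c s(x, y) :=
    fun z hz => by rw [← hS] at hz; exact hz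
  have hyS : y ∈ ({a, b} : Set V) := hS ▸ ⟨hy, rfl⟩
  rcases hyS with rfl | rfl
  · exact ⟨b, hab.symm, hmem b (by simp)⟩
  · exact ⟨a, hab, hmem a (by simp)⟩

lemma exists_color_ne (hx : IsTypeII G c x) (γ : C) : ∃ y, G.Adj x y ∧ c s(x, y) ≠ γ := by
  obtain ⟨-, α, β, hαβ, hα, hβ⟩ := hx
  have hne : ∀ δ, {z | G.Adj x z ∧ c s(x, z) = δ}.ncard = 2 → ∃ y, G.Adj x y ∧ c s(x, y) = δ :=
    fun δ h => Set.nonempty_of_ncard_ne_zero (ne_of_eq_of_ne h two_ne_zero)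
  by_cases hγ : α = γ
  · obtain ⟨y, hy, hc⟩ := hne β hβ
    exact ⟨y, hy, hc ▸ hγ ▸ hαβ.symm⟩
  · obtain ⟨y, hy, hc⟩ := hne α hα
    exact ⟨y, hy, hc ▸ hγ⟩

end IsTypeII

section ColorTriangle

variable [Finite V] {x y z : V}

lemma colorSpan_eq_of_color_eq (hspan : (colorSpan G c (c s(x, y))).ncard ≤ 3)
    (hxy : G.Adj x y) (hxz : G.Adj x z) (hyz : y ≠ z) (hc : c s(x, z) = c s(x, y)) :
    colorSpan G c (c s(x, y)) = {x, y, z} := by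
  refine (Set.eq_of_subset_of_ncard_le ?_ ?_ (Set.toFinite _)).symm
  · rintro t (rfl | rfl | rfl)
    · exact ⟨y, hxy, rfl⟩
    · exact ⟨x, hxy.symm, by rw [Sym2.eq_swap]⟩
    · exact ⟨x, hxz.symm, by rw [Sym2.eq_swap, hc]⟩
  · rwa [Set.ncard_insert_of_notMem (by simp [hxy.ne, hxz.ne]), Set.ncard_pair hyz]

lemma adj_and_color_eq_of_color_eq (hspan : (colorSpan G c (c s(x, y))).ncard ≤ 3)
    (hy : IsTypeII G c y) (hxy : G.Adj x y) (hxz : G.Adj x z) (hyz : y ≠ z)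
    (hc : c s(x, z) = c s(x, y)) : G.Adj y z ∧ c s(y, z) = c s(x, y) := by
  have hspan_eq := colorSpan_eq_of_color_eq hspan hxy hxz hyz hc
  have hcyx : c s(y, x) = c s(x, y) := by rw [Sym2.eq_swap]
  have hsub : {t | G.Adj y t ∧ c s(y, t) = c s(y, x)} ⊆ {x, z} := by
    rintro t ⟨hyt, hct⟩
    have ht : t ∈ colorSpan G c (c s(x, y)) :=
      ⟨y, hyt.symm, by rw [Sym2.eq_swap, hct, hcyx]⟩
    rw [hspan_eq] at ht
    rcases ht with rfl | rfl | rfl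
    · simp
    · exact absurd rfl hyt.ne
    · simp
  have hS : {t | G.Adj y t ∧ c s(y, t) = c s(y, x)} = {x, z} :=
    Set.eq_of_subset_of_ncard_le hsub
      (by rw [hy.ncard_color_eq hxy.symm]; exact (Set.ncard_insert_le x {z}).trans (by simp))
      (Set.toFinite _)
  have hz : z ∈ {t | G.Adj y t ∧ c s(y, t) = c s(y, x)} := by rw [hS]; simp
  exact ⟨hz.1, hz.2.trans hcyx⟩

end ColorTriangle

namespace SimpleGraph.Walk

lemma exists_eq_append_cons_of_mem_edges {u v : V} (p : G.Walk u v) {e : Sym2 V}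
    (he : e ∈ p.edges) :
    ∃ (x y : V) (h : G.Adj x y) (p₁ : G.Walk u x) (p₂ : G.Walk y v),
      s(x, y) = e ∧ p = p₁.append (cons h p₂) := by
  induction p with
  | nil => simp at he
  | @cons a b _ h q ih =>
    rw [edges_cons, List.mem_cons] at he
    rcases he with rfl | he
    · exact ⟨a, b, h, nil, q, rfl, rfl⟩
    · obtain ⟨x, y, hxy, p₁, p₂, rfl, rfl⟩ := ih he
      exact ⟨x, y, hxy, cons h p₁, p₂, rfl, rfl⟩

lemma isRainbow_cons {u v w : V} {h : G.Adj u v} {p : G.Walk v w} :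
    (cons h p).IsRainbow c ↔ c s(u, v) ∉ p.edges.map c ∧ p.IsRainbow c := by
  rw [IsRainbow, edges_cons, List.map_cons, List.nodup_cons]
  rfl

lemma IsRainbow.of_append_left {u v w : V} {p : G.Walk u v} {q : G.Walk v w}
    (h : (p.append q).IsRainbow c) : p.IsRainbow c := by
  rw [IsRainbow, edges_append, List.map_append] at h
  exact h.of_append_left

lemma IsPath.isCycle_cons_of_isRainbow {u v : V} {p : G.Walk u v} (hp : p.IsPath)
    (h : G.Adj v u) (hc : (cons h p).IsRainbow c) : (cons h p).IsCycle :=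
  (cons_isCycle_iff p h).2 ⟨hp, fun he => (isRainbow_cons.1 hc).1 (List.mem_map_of_mem he)⟩

end SimpleGraph.Walk

open Walk in
lemma exists_append_of_color_mem {u v t₀ t₁ : V} {δ : C}
    (hspan : colorSpan G c δ = {u, t₀, t₁}) {p : G.Walk u v} (hp : p.IsPath)
    (hc : p.IsRainbow c) (hδ : c s(u, p.snd) ≠ δ) (hδp : δ ∈ p.edges.map c) :
    ∃ x ∈ ({t₀, t₁} : Set V), ∃ (p₁ : G.Walk u x) (r : G.Walk x v),
      p = p₁.append r ∧ δ ∉ p₁.edges.map c := by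
  obtain ⟨e, he, hce⟩ := List.mem_map.1 hδp
  obtain ⟨x, y, hxy, p₁, p₂, rfl, rfl⟩ := p.exists_eq_append_cons_of_mem_edges he
  have hx : x ∈ colorSpan G c δ := ⟨y, hxy, hce⟩
  rw [hspan] at hx
  rcases hx with rfl | hx
  · refine absurd ?_ hδ
    rw [← hce, hp.snd_of_toSubgraph_adj (adj_toSubgraph_iff_mem_edges.2 he)]
  · refine ⟨x, hx, p₁, cons hxy p₂, rfl, ?_⟩
    rw [IsRainbow, edges_append, edges_cons, List.map_append, List.map_cons,
      List.nodup_append] at hc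
    exact fun h => hc.2.2 _ h _ List.mem_cons_self hce.symm

open Walk in
lemma exists_rainbow_cycle_of_isPath [Fintype V] (hII : ∀ x, IsTypeII G c x)
    (hspan : ∀ α, (colorSpan G c α).ncard ≤ 3) {u v : V} (p : G.Walk u v) (hp : p.IsPath)
    (hc : p.IsRainbow c) : ∃ (a : V) (w : G.Walk a a), w.IsCycle ∧ w.IsRainbow c := by
  obtain ⟨t₀, hut₀, hδ⟩ := (hII u).exists_color_ne (c s(u, p.snd))
  obtain ⟨t₁, ht₁₀, hut₁, hc₁⟩ := (hII u).exists_ne_color_eq hut₀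
  have hspan_eq := colorSpan_eq_of_color_eq (hspan _) hut₀ hut₁ ht₁₀.symm hc₁
  have hclose : ∀ x ∈ ({t₀, t₁} : Set V), G.Adj x u ∧ c s(x, u) = c s(u, t₀) := by
    rintro x (rfl | rfl)
    · exact ⟨hut₀.symm, by rw [Sym2.eq_swap]⟩
    · exact ⟨hut₁.symm, by rw [Sym2.eq_swap, hc₁]⟩
  by_cases hext : t₀ ∉ p.support ∧ c s(u, t₀) ∉ p.edges.map c
  · have hp' : (cons hut₀.symm p).IsPath := (cons_isPath_iff _ _).2 ⟨hp, hext.1⟩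
    refine exists_rainbow_cycle_of_isPath hII hspan _ hp' (isRainbow_cons.2 ⟨?_, hc⟩)
    rw [Sym2.eq_swap]
    exact hext.2
  obtain ⟨x, hx, p₁, r, rfl, hδ₁⟩ : ∃ x ∈ ({t₀, t₁} : Set V), ∃ (p₁ : G.Walk u x)
      (r : G.Walk x v), p = p₁.append r ∧ c s(u, t₀) ∉ p₁.edges.map c := by
    by_cases hδp : c s(u, t₀) ∈ p.edges.map c
    · exact exists_append_of_color_mem hspan_eq hp hc hδ.symm hδp
    · obtain ⟨p₁, r, rfl⟩ := mem_support_iff_exists_append.1 (by tauto : t₀ ∈ p.support)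
      refine ⟨t₀, by simp, p₁, r, rfl, fun h => hδp ?_⟩
      rw [edges_append, List.map_append]
      exact List.mem_append_left _ h
  obtain ⟨hxu, hcxu⟩ := hclose x hx
  have hc' : (cons hxu p₁).IsRainbow c := isRainbow_cons.2 ⟨hcxu ▸ hδ₁, hc.of_append_left⟩
  exact ⟨x, _, hp.of_append_left.isCycle_cons_of_isRainbow hxu hc', hc'⟩
termination_by Fintype.card V - p.length
decreasing_by
  have := hp'.length_lt
  rw [length_cons] at this ⊢
  omega

section DeleteRainbowCycle

variable {u v x y : V}

lemma SimpleGraph.Walk.IsCycle.even_ncard_neighborSet_toSubgraph {w : G.Walk u u}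
    (hw : w.IsCycle) (x : V) : Even (w.toSubgraph.neighborSet x).ncard := by
  by_cases hx : x ∈ w.support
  · rw [hw.ncard_neighborSet_toSubgraph_eq_two hx]
    exact even_two
  · have h : w.toSubgraph.neighborSet x = ∅ :=
      Set.eq_empty_of_forall_notMem fun y hy => hx (Walk.mem_support_of_adj_toSubgraph hy)
    simp [h]

variable [Finite V]

lemma SimpleGraph.Walk.vdeg_deleteEdges_add (w : G.Walk u v) (x : V) :
    vdeg (G.deleteEdges w.edgeSet) x + (w.toSubgraph.neighborSet x).ncard = vdeg G x := by
  have hN : (G.deleteEdges w.edgeSet).neighborSet x =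
      G.neighborSet x \ w.toSubgraph.neighborSet x := by
    ext y
    simp [Walk.edgeSet, Walk.adj_toSubgraph_iff_mem_edges]
  rw [vdeg, hN, Set.ncard_sdiff_add_ncard_of_subset (w.toSubgraph.neighborSet_subset x)]
  rfl

lemma SimpleGraph.Walk.IsCycle.even_vdeg_deleteEdges {w : G.Walk u u} (hw : w.IsCycle)
    (hx : Even (vdeg G x)) : Even (vdeg (G.deleteEdges w.edgeSet) x) := by
  rw [← w.vdeg_deleteEdges_add x, Nat.even_add] at hx
  exact hx.2 (hw.even_ncard_neighborSet_toSubgraph x)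

variable {w : G.Walk u v}

lemma exists_adj_deleteEdges_color_eq (hx : IsTypeII G c x) (hw : w.IsRainbow c)
    (hxy : G.Adj x y) : ∃ z, (G.deleteEdges w.edgeSet).Adj x z ∧ c s(x, z) = c s(x, y) := by
  by_cases he : s(x, y) ∈ w.edges
  · obtain ⟨z, hzy, hxz, hc⟩ := hx.exists_ne_color_eq hxy
    refine ⟨z, (deleteEdges_adj ..).2 ⟨hxz, fun hz => hzy ?_⟩, hc⟩
    exact Sym2.congr_right.1 (hw.eq_of_color_eq hz he hc)
  · exact ⟨y, (deleteEdges_adj ..).2 ⟨hxy, he⟩, rfl⟩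

lemma colorDeg_deleteEdges_of_isRainbow (hx : IsTypeII G c x) (hw : w.IsRainbow c) :
    colorDeg (G.deleteEdges w.edgeSet) c x = colorDeg G c x := by
  unfold colorDeg
  congr 1
  ext α
  constructor
  · rintro ⟨y, hy, rfl⟩
    exact ⟨y, deleteEdges_le _ hy, rfl⟩
  · rintro ⟨y, hy, rfl⟩
    exact exists_adj_deleteEdges_color_eq hx hw hy

lemma exists_triangle_deleteEdges (hspan : (colorSpan G c (c s(x, y))).ncard ≤ 3)
    (hx : IsTypeII G c x) (hy : IsTypeII G c y) (hw : w.IsRainbow c) (hxy : G.Adj x y)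
    (he : s(x, y) ∈ w.edges) :
    ∃ z, (G.deleteEdges w.edgeSet).Adj x z ∧ (G.deleteEdges w.edgeSet).Adj y z ∧
      c s(x, z) = c s(x, y) ∧ c s(y, z) = c s(x, y) := by
  obtain ⟨z, hzy, hxz, hcxz⟩ := hx.exists_ne_color_eq hxy
  obtain ⟨hyz, hcyz⟩ := adj_and_color_eq_of_color_eq hspan hy hxy hxz hzy.symm hcxz
  refine ⟨z, (deleteEdges_adj ..).2 ⟨hxz, fun hz => hzy ?_⟩,
    (deleteEdges_adj ..).2 ⟨hyz, fun hz => ?_⟩, hcxz, hcyz⟩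
  · exact Sym2.congr_right.1 (hw.eq_of_color_eq hz he hcxz)
  · rcases Sym2.eq_iff.1 (hw.eq_of_color_eq hz he hcyz) with ⟨h, -⟩ | ⟨-, h⟩
    · exact hxy.ne h.symm
    · exact hxz.ne h.symm

lemma IsTypeII.color_ne_of_sides (hv : IsTypeII G c v) {A B : Set V} (hI : A ∩ B = {v})
    (hA : ∃ a₁ a₂, a₁ ≠ a₂ ∧ a₁ ∈ A ∧ a₂ ∈ A ∧ G.Adj v a₁ ∧ G.Adj v a₂ ∧
      c s(v, a₁) = c s(v, a₂))
    (hB : ∃ b₁ b₂, b₁ ≠ b₂ ∧ b₁ ∈ B ∧ b₂ ∈ B ∧ G.Adj v b₁ ∧ G.Adj v b₂ ∧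
      c s(v, b₁) = c s(v, b₂))
    (hvx : G.Adj v x) (hxB : x ∉ B) (hvy : G.Adj v y) (hyA : y ∉ A) :
    c s(v, x) ≠ c s(v, y) := by
  obtain ⟨a₁, a₂, ha, ha₁, ha₂, hva₁, hva₂, hca⟩ := hA
  obtain ⟨b₁, b₂, hb, hb₁, hb₂, hvb₁, hvb₂, hcb⟩ := hB
  have hnB : ∀ a ∈ A, G.Adj v a → a ∉ B := fun a haA hva haB => by
    have h : a ∈ A ∩ B := ⟨haA, haB⟩
    rw [hI] at h
    exact hva.ne h.symm
  have h4 : ({a₁, a₂, b₁, b₂} : Set V).ncard = 4 :=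
    Set.ncard_eq_four.2 ⟨a₁, a₂, b₁, b₂, ha, fun h => hnB a₁ ha₁ hva₁ (h ▸ hb₁),
      fun h => hnB a₁ ha₁ hva₁ (h ▸ hb₂), fun h => hnB a₂ ha₂ hva₂ (h ▸ hb₁),
      fun h => hnB a₂ ha₂ hva₂ (h ▸ hb₂), hb, rfl⟩
  have hN : G.neighborSet v = {a₁, a₂, b₁, b₂} := by
    refine (Set.eq_of_subset_of_ncard_le ?_ (by rw [h4]; exact hv.1.le) (Set.toFinite _)).symm
    rintro t (rfl | rfl | rfl | rfl) <;> assumption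
  have hx : x ∈ ({a₁, a₂, b₁, b₂} : Set V) := hN ▸ hvx
  have hy : y ∈ ({a₁, a₂, b₁, b₂} : Set V) := hN ▸ hvy
  have hcx : c s(v, a₁) = c s(v, x) ∧ c s(v, a₂) = c s(v, x) := by
    rcases hx with rfl | rfl | rfl | rfl
    · exact ⟨rfl, hca.symm⟩
    · exact ⟨hca, rfl⟩
    · exact absurd hb₁ hxB
    · exact absurd hb₂ hxB
  have hcy : c s(v, b₁) = c s(v, y) ∧ c s(v, b₂) = c s(v, y) := by
    rcases hy with rfl | rfl | rfl | rfl
    · exact absurd ha₁ hyA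
    · exact absurd ha₂ hyA
    · exact ⟨rfl, hcb.symm⟩
    · exact ⟨hcb, rfl⟩
  intro hxy
  have hall : ({a₁, a₂, b₁, b₂} : Set V) ⊆ {z | G.Adj v z ∧ c s(v, z) = c s(v, x)} := by
    rintro t (rfl | rfl | rfl | rfl)
    exacts [⟨hva₁, hcx.1⟩, ⟨hva₂, hcx.2⟩, ⟨hvb₁, hcy.1.trans hxy.symm⟩,
      ⟨hvb₂, hcy.2.trans hxy.symm⟩]
  have h := Set.ncard_le_ncard hall (Set.toFinite _)
  rw [h4, hv.ncard_color_eq hvx] at h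
  omega

lemma not_isTypeX_deleteEdges (hII : ∀ x, IsTypeII G c x)
    (hspan : ∀ α, (colorSpan G c α).ncard ≤ 3) (hw : w.IsRainbow c)
    (hnoX : ∀ v, ¬ IsTypeX G c v) (v : V) : ¬ IsTypeX (G.deleteEdges w.edgeSet) c v := by
  rintro ⟨-, A, B, hU, hI, hE, ⟨a₁, a₂, ha, ha₁, ha₂, hva₁, hva₂, hca⟩,
    ⟨b₁, b₂, hb, hb₁, hb₂, hvb₁, hvb₂, hcb⟩⟩
  have hle := G.deleteEdges_le w.edgeSet
  have hA : ∃ a₁ a₂, a₁ ≠ a₂ ∧ a₁ ∈ A ∧ a₂ ∈ A ∧ G.Adj v a₁ ∧ G.Adj v a₂ ∧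
      c s(v, a₁) = c s(v, a₂) := ⟨a₁, a₂, ha, ha₁, ha₂, hle hva₁, hle hva₂, hca⟩
  have hB : ∃ b₁ b₂, b₁ ≠ b₂ ∧ b₁ ∈ B ∧ b₂ ∈ B ∧ G.Adj v b₁ ∧ G.Adj v b₂ ∧
      c s(v, b₁) = c s(v, b₂) := ⟨b₁, b₂, hb, hb₁, hb₂, hle hvb₁, hle hvb₂, hcb⟩
  have hside : ∀ {x y}, (G.deleteEdges w.edgeSet).Adj x y →
      (x ∈ A ∧ y ∈ A) ∨ (x ∈ B ∧ y ∈ B) := fun hxy => by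
    simpa only [Sym2.mem_iff, forall_eq_or_imp, forall_eq] using hE s(_, _) hxy
  have hcross : ∀ x y, G.Adj x y → s(x, y) ∈ w.edges → x ∉ B → y ∉ A → False := by
    intro x y hxy he hxB hyA
    obtain ⟨z, hxz, hyz, hcxz, hcyz⟩ :=
      exists_triangle_deleteEdges (hspan _) (hII x) (hII y) hw hxy he
    have hz : z ∈ A ∩ B := ⟨(hside hxz).resolve_right (fun h => hxB h.1) |>.2,
      (hside hyz).resolve_left (fun h => hyA h.1) |>.2⟩
    rw [hI, Set.mem_singleton_iff] at hz
    subst hz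
    refine (hII z).color_ne_of_sides hI hA hB (hle hxz).symm hxB (hle hyz).symm hyA ?_
    simp only [Sym2.eq_swap (a := z)]
    exact hcxz.trans hcyz.symm
  refine hnoX v ⟨(hII v).1, A, B, hU, hI, ?_, hA, hB⟩
  rintro ⟨x, y⟩ hxy
  simp only [Sym2.mem_iff, forall_eq_or_imp, forall_eq]
  by_cases he : s(x, y) ∈ w.edges
  · have hx : x ∈ A ∪ B := hU ▸ Set.mem_univ x
    have hy : y ∈ A ∪ B := hU ▸ Set.mem_univ y
    have h₁ := hcross x y hxy he
    have h₂ := hcross y x hxy.symm (Sym2.eq_swap ▸ he)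
    rw [Set.mem_union] at hx hy
    tauto
  · exact hside ((deleteEdges_adj ..).2 ⟨hxy, he⟩)

end DeleteRainbowCycle

end

theorem typeII_rainbow_cycle_exists_and_delete_good_general {V C : Type*} [Fintype V]
    [Nonempty V]
    (G : SimpleGraph V) (c : Sym2 V → C) (hG : IsGood G c) (hII : ∀ x, IsTypeII G c x) :
    (∃ (u : V) (w : G.Walk u u), w.IsCycle ∧ (w.edges.map c).Nodup) ∧
      ∀ (u : V) (w : G.Walk u u), w.IsCycle → (w.edges.map c).Nodup →
        IsGood (G.deleteEdges {e | e ∈ w.edges}) c := by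
  obtain ⟨⟨heven, hdeg, htri, hcdeg, hspan⟩, hnoX⟩ := hG
  refine ⟨exists_rainbow_cycle_of_isPath hII hspan (.nil : G.Walk (Classical.arbitrary V) _)
    Walk.IsPath.nil List.nodup_nil, fun u w hw hrain => ?_⟩
  change IsGood (G.deleteEdges w.edgeSet) c
  have hle := G.deleteEdges_le w.edgeSet
  refine ⟨⟨fun x => hw.even_vdeg_deleteEdges (heven x),
    fun x => (vdeg_mono hle x).trans (hdeg x), htri.mono hle, fun x _ => ?_,
    fun α => (ncard_colorSpan_mono hle α).trans (hspan α)⟩,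
    not_isTypeX_deleteEdges hII hspan hrain hnoX⟩
  rw [colorDeg_deleteEdges_of_isRainbow (hII x) hrain]
  exact hcdeg x (by rw [(hII x).1]; decide)

/-- If `G` is a good colored graph in which every vertex is of Type II, then `G`
contains a rainbow cycle; moreover, for every rainbow cycle `C` in `G`, the graph
obtained by deleting the edges of `C` is again a good colored graph. -/
theorem typeII_rainbow_cycle_exists_and_delete_good {V C : Type*} [Fintype V]
    [DecidableEq V] [Nonempty V]
    (G : SimpleGraph V) (c : Sym2 V → C) (hG : IsGood G c) (hII : ∀ x, IsTypeII G c x) :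
    (∃ (u : V) (w : G.Walk u u), w.IsCycle ∧ (w.edges.map c).Nodup) ∧
      ∀ (u : V) (w : G.Walk u u), w.IsCycle → (w.edges.map c).Nodup →
        IsGood (G.deleteEdges {e | e ∈ w.edges}) c :=
  typeII_rainbow_cycle_exists_and_delete_good_general G c hG hII
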